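/- Let (Ω, 𝒫) be a probability space, let S and T be measurable spaces, and let g : S × T → ℝ be a measurable function taking values in {0,1}. Let X₁, …, Xₙ be i.i.d. S-valued random variables with common law μ, let W₁, …, W_l be i.i.d. T-valued random variables with common law ν, and suppose the whole family (X₁,…,Xₙ, W₁,…,W_l) is jointly independent. Then for every ε > 0 and every α ∈ (0,1), 𝒫( (1/(n·l)) · Σ_{j=1}^{n} Σ_{i=1}^{l} g(X_j, W_i) − ∫_S ∫_T g(x,w) dν(w) dμ(x) ≥ ε ) ≤ n · exp( − l α² ε² ) + exp( − n (1−α)² ε² ). -/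

import Mathlib

open MeasureTheory ProbabilityTheory

universe u

/-- The codomain family for the combined family of random variables indexed by `ι ⊕ κ`:
the first block takes values in `S`, the second in `T`. -/
def sumType (S T : Type u) {ι κ : Type*} : ι ⊕ κ → Type u
  | .inl _ => S
  | .inr _ => T

/-- The corresponding family of measurable space structures. -/
def sumMS {S T : Type u} {ι κ : Type*} (mS : MeasurableSpace S) (mT : MeasurableSpace T) :
    ∀ k : ι ⊕ κ, MeasurableSpace (sumType S T k)
  | .inl _ => mS
  | .inr _ => mT

/-- The combined family of random variables `(X₁, …, Xₙ, W₁, …, W_l)`. -/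
def sumFun {Ω : Type*} {S T : Type u} {ι κ : Type*} (X : ι → Ω → S) (W : κ → Ω → T) :
    ∀ k : ι ⊕ κ, Ω → sumType S T k
  | .inl j => X j
  | .inr i => W i

/-!
Split `ε = αε + (1 - α)ε` and put `G x = ∫ g(x, w) dν(w)`. If the double average exceeds
`∫ G dμ + ε`, then either some row average `(1/l) ∑ᵢ g(Xⱼ, Wᵢ)` exceeds `G(Xⱼ) + αε`, or
`(1/n) ∑ⱼ G(Xⱼ)` exceeds `∫ G dμ + (1 - α)ε`. Since `Xⱼ` is independent of `(W₁, …, W_l)`,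
conditionally on `Xⱼ = x` a row is a sum of `l` independent `[0,1]`-valued variables of mean `G x`,
so Hoeffding's inequality bounds each of the `n` row events by `exp(-2lα²ε²)`; applied to the
i.i.d. variables `G(Xⱼ)`, it bounds the second event by `exp(-2n(1-α)²ε²)`.
-/

open Real Finset
open scoped ENNReal

section Hoeffding

variable {Ω ι : Type*} [MeasurableSpace Ω] {P : Measure Ω} [IsProbabilityMeasure P] [Fintype ι]

theorem measure_sum_ge_le_of_mem_Icc_zero_one {Z : ι → Ω → ℝ} (hind : iIndepFun Z P)
    (hm : ∀ i, Measurable (Z i)) (h01 : ∀ i ω, Z i ω ∈ Set.Icc (0 : ℝ) 1) {δ : ℝ} (hδ : 0 ≤ δ) :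
    P {ω | ∑ i, P[Z i] + Fintype.card ι * δ ≤ ∑ i, Z i ω}
      ≤ ENNReal.ofReal (exp (-(2 * Fintype.card ι * δ ^ 2))) := by
  have hsubG : ∀ i ∈ (univ : Finset ι),
      HasSubgaussianMGF (fun ω ↦ Z i ω - P[Z i]) ((‖(1 : ℝ) - 0‖₊ / 2) ^ 2) P := fun i _ ↦
    hasSubgaussianMGF_of_mem_Icc (hm i).aemeasurable (ae_of_all _ (h01 i))
  have hind' : iIndepFun (fun i ω ↦ Z i ω - P[Z i]) P :=
    hind.comp (fun i x ↦ x - ∫ ω, Z i ω ∂P) fun _ ↦ measurable_id.sub_const _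
  have hoeff := HasSubgaussianMGF.measure_sum_ge_le_of_iIndepFun hind' hsubG
    (mul_nonneg (Nat.cast_nonneg (Fintype.card ι)) hδ)
  have hset : {ω | ∑ i, P[Z i] + Fintype.card ι * δ ≤ ∑ i, Z i ω}
      = {ω | Fintype.card ι * δ ≤ ∑ i, (Z i ω - P[Z i])} := by
    ext ω
    simp only [Set.mem_ofPred_eq, sum_sub_distrib]
    constructor <;> intro h <;> linarith
  have hexp : -(Fintype.card ι * δ) ^ 2 / (2 * ∑ _i : ι, (‖(1 : ℝ) - 0‖₊ / 2) ^ 2 : NNReal)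
      = -(2 * Fintype.card ι * δ ^ 2) := by
    rcases (Fintype.card ι).eq_zero_or_pos with h0 | hpos
    · simp [h0]
    · simp only [sub_zero, nnnorm_one, sum_const, card_univ, nsmul_eq_mul, NNReal.coe_mul,
        NNReal.coe_ofNat, NNReal.coe_natCast, NNReal.coe_div, NNReal.coe_one, NNReal.coe_pow]
      field_simp
  rw [hset, ← ofReal_measureReal, ← hexp]
  exact ENNReal.ofReal_le_ofReal hoeff

end Hoeffding

section Conditioning

variable {Ω α β : Type*} [MeasurableSpace Ω] [MeasurableSpace α] [MeasurableSpace β]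
  {P : Measure Ω} [IsProbabilityMeasure P]

theorem measure_preimage_prodMk_le_of_indepFun {X : Ω → α} {Y : Ω → β} (hX : Measurable X)
    (hY : Measurable Y) (hXY : IndepFun X Y P) {E : Set (α × β)} (hE : MeasurableSet E) {c : ℝ≥0∞}
    (hc : ∀ x, P (Y ⁻¹' (Prod.mk x ⁻¹' E)) ≤ c) :
    P ((fun ω ↦ (X ω, Y ω)) ⁻¹' E) ≤ c := by
  rw [← Measure.map_apply (hX.prodMk hY) hE,
    (indepFun_iff_map_prod_eq_prod_map_map hX.aemeasurable hY.aemeasurable).mp hXY,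
    Measure.prod_apply hE]
  calc ∫⁻ x, P.map Y (Prod.mk x ⁻¹' E) ∂P.map X ≤ ∫⁻ _, c ∂P.map X :=
        lintegral_mono fun x ↦ (Measure.map_apply hY (measurable_prodMk_left hE)).trans_le (hc x)
    _ = c := by simp [Measure.map_apply hX MeasurableSet.univ]

end Conditioning

namespace ProbabilityTheory.iIndepFun

variable {Ω : Type*} {S T : Type u} {ι κ : Type*} [MeasurableSpace Ω] {P : Measure Ω}
  {mS : MeasurableSpace S} {mT : MeasurableSpace T} {X : ι → Ω → S} {W : κ → Ω → T}

theorem left_of_sumFun (h : iIndepFun (m := sumMS mS mT) (sumFun X W) P) : iIndepFun X P :=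
  h.precomp (g := Sum.inl) Sum.inl_injective

theorem right_of_sumFun (h : iIndepFun (m := sumMS mS mT) (sumFun X W) P) : iIndepFun W P :=
  h.precomp (g := Sum.inr) Sum.inr_injective

theorem indepFun_pi_of_sumFun [Fintype κ] (h : iIndepFun (m := sumMS mS mT) (sumFun X W) P)
    (hX : ∀ j, Measurable (X j)) (hW : ∀ i, Measurable (W i)) (j : ι) :
    IndepFun (X j) (fun ω i ↦ W i ω) P := by
  classical
  let _ : ∀ k : ι ⊕ κ, MeasurableSpace (sumType S T k) := sumMS mS mT
  have hmeas : ∀ k, Measurable (sumFun X W k) := by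
    rintro (j | i)
    exacts [hX j, hW i]
  have hdisj : Disjoint ({.inl j} : Finset (ι ⊕ κ)) (univ.image .inr) := by simp
  exact (h.indepFun_finset _ _ hdisj hmeas).comp
    (measurable_pi_apply (⟨.inl j, mem_singleton_self _⟩ : ({.inl j} : Finset (ι ⊕ κ))))
    (measurable_pi_lambda _ fun i ↦
      measurable_pi_apply (⟨.inr i, by simp⟩ : (univ.image .inr : Finset (ι ⊕ κ))))

end ProbabilityTheory.iIndepFun

section IIDSamples

variable {Ω T κ : Type*} [MeasurableSpace Ω] [MeasurableSpace T] {P : Measure Ω}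
  [IsProbabilityMeasure P] [Fintype κ] {W : κ → Ω → T} {ν : Measure T}

theorem measure_sum_comp_ge_le_of_iIndepFun (hind : iIndepFun W P) (hWm : ∀ i, Measurable (W i))
    (hlaw : ∀ i, P.map (W i) = ν) {h : T → ℝ} (hm : Measurable h)
    (h01 : ∀ t, h t ∈ Set.Icc (0 : ℝ) 1) {δ : ℝ} (hδ : 0 ≤ δ) :
    P {ω | Fintype.card κ * ∫ t, h t ∂ν + Fintype.card κ * δ ≤ ∑ i, h (W i ω)}
      ≤ ENNReal.ofReal (exp (-(2 * Fintype.card κ * δ ^ 2))) := by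
  have hmean : ∀ i, ∫ ω, h (W i ω) ∂P = ∫ t, h t ∂ν := fun i ↦ by
    rw [← hlaw i, integral_map (hWm i).aemeasurable hm.aestronglyMeasurable]
  have := measure_sum_ge_le_of_mem_Icc_zero_one (hind.comp (fun _ ↦ h) fun _ ↦ hm)
    (fun i ↦ hm.comp (hWm i)) (fun i ω ↦ h01 (W i ω)) hδ
  simpa [hmean] using this

end IIDSamples

theorem integral_mem_Icc_zero_one {α : Type*} [MeasurableSpace α] {μ : Measure α}
    [IsProbabilityMeasure μ] {f : α → ℝ} (hf : ∀ a, f a ∈ Set.Icc (0 : ℝ) 1) :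
    ∫ a, f a ∂μ ∈ Set.Icc (0 : ℝ) 1 :=
  ⟨integral_nonneg fun a ↦ (hf a).1, by
    simpa using integral_mono_of_nonneg (ae_of_all _ fun a ↦ (hf a).1)
      (integrable_const (μ := μ) (1 : ℝ)) (ae_of_all _ fun a ↦ (hf a).2)⟩

theorem measure_sum_ge_le_of_indepFun_pi {Ω S T κ : Type*} [MeasurableSpace Ω] [MeasurableSpace S]
    [MeasurableSpace T] {P : Measure Ω} [IsProbabilityMeasure P] [Fintype κ] {X : Ω → S}
    {W : κ → Ω → T} {ν : Measure T} [SFinite ν] (hXm : Measurable X) (hWm : ∀ i, Measurable (W i))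
    (hXW : IndepFun X (fun ω i ↦ W i ω) P) (hind : iIndepFun W P) (hlaw : ∀ i, P.map (W i) = ν)
    {g : S × T → ℝ} (hg : Measurable g) (hg01 : ∀ p, g p ∈ Set.Icc (0 : ℝ) 1) {δ : ℝ} (hδ : 0 ≤ δ) :
    P {ω | Fintype.card κ * ∫ t, g (X ω, t) ∂ν + Fintype.card κ * δ ≤ ∑ i, g (X ω, W i ω)}
      ≤ ENNReal.ofReal (exp (-(2 * Fintype.card κ * δ ^ 2))) := by
  let E : Set (S × (κ → T)) :=
    {p | Fintype.card κ * ∫ t, g (p.1, t) ∂ν + Fintype.card κ * δ ≤ ∑ i, g (p.1, p.2 i)}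
  have hE : MeasurableSet E := by
    have hG : Measurable fun x ↦ ∫ t, g (x, t) ∂ν :=
      hg.stronglyMeasurable.integral_prod_right'.measurable
    exact measurableSet_le (((hG.comp measurable_fst).const_mul _).add_const _) (by fun_prop)
  exact measure_preimage_prodMk_le_of_indepFun hXm (measurable_pi_lambda _ hWm) hXW hE fun x ↦
    measure_sum_comp_ge_le_of_iIndepFun hind hWm hlaw (hg.comp measurable_prodMk_left)
      (fun t ↦ hg01 (x, t)) hδ

theorem exists_le_sum_or_le_sum_of_le_average_sub {ι κ : Type*} [Fintype ι] [Nonempty ι]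
    [Fintype κ] [Nonempty κ] {a : ι → κ → ℝ} {G : ι → ℝ} {I δ₁ δ₂ : ℝ}
    (h : δ₁ + δ₂ ≤ 1 / (Fintype.card ι * Fintype.card κ) * ∑ j, ∑ i, a j i - I) :
    (∃ j, Fintype.card κ * G j + Fintype.card κ * δ₁ ≤ ∑ i, a j i)
      ∨ Fintype.card ι * I + Fintype.card ι * δ₂ ≤ ∑ j, G j := by
  by_contra! hcon
  obtain ⟨hrow, hmean⟩ := hcon
  set n : ℝ := (Fintype.card ι : ℝ)
  set l : ℝ := (Fintype.card κ : ℝ)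
  have hn : 0 < n := Nat.cast_pos.mpr Fintype.card_pos
  have hl : 0 < l := Nat.cast_pos.mpr Fintype.card_pos
  have hsum : ∑ j, ∑ i, a j i < l * ∑ j, G j + n * l * δ₁ :=
    calc ∑ j, ∑ i, a j i < ∑ j, (l * G j + l * δ₁) :=
          sum_lt_sum_of_nonempty univ_nonempty fun j _ ↦ hrow j
      _ = l * ∑ j, G j + n * l * δ₁ := by simp [sum_add_distrib, mul_sum, n]; ring
  rw [one_div_mul_eq_div, le_sub_iff_add_le, le_div_iff₀ (mul_pos hn hl)] at h
  nlinarith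

/-- **Intermediate bound in the proof of Proposition 1.** For every `ε > 0` and every splitting
parameter `α ∈ (0,1)`, the probability that the empirical double average exceeds the expected
value `∫∫ g dν dμ` by at least `ε` is at most `n·exp(−lα²ε²) + exp(−n(1−α)²ε²)`. -/
theorem stmt3 {Ω : Type*} {S T : Type u} [MeasureSpace Ω]
    [IsProbabilityMeasure (ℙ : Measure Ω)]
    [mS : MeasurableSpace S] [mT : MeasurableSpace T]
    (μ : Measure S) (ν : Measure T)
    (g : S × T → ℝ) (hg : Measurable g) (hg01 : ∀ p, g p = 0 ∨ g p = 1)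
    (n l : ℕ) (hn : 0 < n) (hl : 0 < l)
    (X : Fin n → Ω → S) (W : Fin l → Ω → T)
    (hXm : ∀ j, Measurable (X j)) (hWm : ∀ i, Measurable (W i))
    (hXlaw : ∀ j, Measure.map (X j) ℙ = μ)
    (hWlaw : ∀ i, Measure.map (W i) ℙ = ν)
    (hindep : iIndepFun (m := sumMS mS mT) (sumFun X W) ℙ)
    (ε : ℝ) (hε : 0 < ε) (α : ℝ) (hα : α ∈ Set.Ioo (0 : ℝ) 1) :
    ℙ {ω | (1 / ((n : ℝ) * l)) * ∑ j : Fin n, ∑ i : Fin l, g (X j ω, W i ω)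
        - ∫ x, ∫ w, g (x, w) ∂ν ∂μ ≥ ε}
      ≤ ENNReal.ofReal
          ((n : ℝ) * Real.exp (-((l : ℝ) * α ^ 2 * ε ^ 2))
            + Real.exp (-((n : ℝ) * (1 - α) ^ 2 * ε ^ 2))) := by
  obtain ⟨hα0, hα1⟩ := hα
  have := Fin.pos_iff_nonempty.mp hn
  have := Fin.pos_iff_nonempty.mp hl
  have : IsProbabilityMeasure ν :=
    hWlaw ⟨0, hl⟩ ▸ Measure.isProbabilityMeasure_map (hWm _).aemeasurable
  have hg01' : ∀ p, g p ∈ Set.Icc (0 : ℝ) 1 := fun p ↦ by rcases hg01 p with h | h <;> simp [h]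
  set G : S → ℝ := fun x ↦ ∫ w, g (x, w) ∂ν
  set A : Fin n → Set Ω := fun j ↦ {ω | l * G (X j ω) + l * (α * ε) ≤ ∑ i, g (X j ω, W i ω)}
  set B : Set Ω := {ω | n * ∫ x, G x ∂μ + n * ((1 - α) * ε) ≤ ∑ j, G (X j ω)}
  have hA : ∀ j, ℙ (A j) ≤ ENNReal.ofReal (exp (-(2 * l * (α * ε) ^ 2))) := fun j ↦ by
    simpa using measure_sum_ge_le_of_indepFun_pi (hXm j) hWm
      (hindep.indepFun_pi_of_sumFun hXm hWm j) hindep.right_of_sumFun hWlaw hg hg01' (by positivity)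
  have hB : ℙ B ≤ ENNReal.ofReal (exp (-(2 * n * ((1 - α) * ε) ^ 2))) := by
    simpa using measure_sum_comp_ge_le_of_iIndepFun hindep.left_of_sumFun hXm hXlaw
      hg.stronglyMeasurable.integral_prod_right'.measurable
      (fun x ↦ integral_mem_Icc_zero_one fun w ↦ hg01' (x, w)) (by nlinarith)
  have hsub : {ω | (1 / ((n : ℝ) * l)) * ∑ j : Fin n, ∑ i : Fin l, g (X j ω, W i ω)
      - ∫ x, G x ∂μ ≥ ε} ⊆ (⋃ j, A j) ∪ B := fun ω (hω : _ ≥ ε) ↦ by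
    simpa [A, B] using exists_le_sum_or_le_sum_of_le_average_sub
      (a := fun j i ↦ g (X j ω, W i ω)) (G := fun j ↦ G (X j ω)) (I := ∫ x, G x ∂μ)
      (δ₁ := α * ε) (δ₂ := (1 - α) * ε) (by simp only [Fintype.card_fin]; linarith)
  calc _ ≤ ℙ ((⋃ j, A j) ∪ B) := measure_mono hsub
    _ ≤ ∑ j, ℙ (A j) + ℙ B :=
      (measure_union_le _ _).trans (add_le_add_left (measure_iUnion_fintype_le _ _) _)
    _ ≤ ∑ _j : Fin n, ENNReal.ofReal (exp (-(2 * l * (α * ε) ^ 2)))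
          + ENNReal.ofReal (exp (-(2 * n * ((1 - α) * ε) ^ 2))) :=
      add_le_add (sum_le_sum fun j _ ↦ hA j) hB
    _ ≤ _ := by
      rw [sum_const, card_univ, Fintype.card_fin, nsmul_eq_mul, ← ENNReal.ofReal_natCast,
        ← ENNReal.ofReal_mul (Nat.cast_nonneg n),
        ← ENNReal.ofReal_add (by positivity) (by positivity)]
      gcongr ENNReal.ofReal (_ * exp ?_ + exp ?_) <;>
        nlinarith [mul_nonneg (Nat.cast_nonneg (α := ℝ) l) (sq_nonneg (α * ε)),
          mul_nonneg (Nat.cast_nonneg (α := ℝ) n) (sq_nonneg ((1 - α) * ε))]
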